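/- (Theorem: centralized count variance.) In the UBS sampling model with universe rate p satisfying max(ε₁, ε₂) ≤ p ≤ 1 and uniform rates q₁ = ε₁/p and q₂ = ε₂/p, the variance of the count estimator equals Var(Ĵ_count) = (1/p − 1)·γ_{2,2} + (1/ε₂ − 1/p)·γ_{2,1} + (1/ε₁ − 1/p)·γ_{1,2} + (p/(ε₁ε₂) − 1/ε₁ − 1/ε₂ + 1/p)·γ_{1,1}. -/

import Mathlib

/-!
Group the sample by join key: the sampled count is `Z = ∑ v, U_v A_v B_v` with
`A_v = ∑ i, ξ_{v,i}` and `B_v = ∑ j, η_{v,j}`. The summands for different keys are functions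
of disjoint subfamilies of the independent coins, hence independent, so `Var Z` is the sum of the
per-key variances. Within a key, `U_v`, `A_v`, `B_v` again depend on disjoint subfamilies, so
`Var(U_v A_v B_v) = E[U_v²] E[A_v²] E[B_v²] - (E U_v E A_v E B_v)²`, and `A_v`, `B_v` are sums of
pairwise independent Bernoulli variables, so `E[A_v²] = a_v q₁ (1 - q₁) + (a_v q₁)²`.
Substituting `q₁ = ε₁ / p`, `q₂ = ε₂ / p` and scaling by `(p q₁ q₂)⁻²` gives the formula.
-/

open MeasureTheory ProbabilityTheory

namespace ProbabilityTheory

section Subfamily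

variable {Ω κ : Type*} {mΩ : MeasurableSpace Ω} {μ : Measure Ω}
  {β : κ → Type*} [mβ : ∀ k, MeasurableSpace (β k)] {f : ∀ k, Ω → β k}

abbrev comapOn (f : ∀ k, Ω → β k) (S : Set κ) : MeasurableSpace Ω :=
  ⨆ k ∈ S, (mβ k).comap (f k)

lemma measurable_comapOn {S : Set κ} {k : κ} (hk : k ∈ S) : Measurable[comapOn f S] (f k) :=
  Measurable.of_comap_le (le_iSup₂ (f := fun k (_ : k ∈ S) => (mβ k).comap (f k)) k hk)

lemma iIndepFun.indepFun_of_measurable_comapOn {γ δ : Type*} [MeasurableSpace γ]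
    [MeasurableSpace δ] {X : Ω → γ} {Y : Ω → δ} (h : iIndepFun f μ)
    (hf : ∀ k, Measurable (f k)) {S T : Set κ} (hST : Disjoint S T)
    (hX : Measurable[comapOn f S] X) (hY : Measurable[comapOn f T] Y) : X ⟂ᵢ[μ] Y :=
  (IndepFun_iff_Indep X Y μ).2 <| indep_of_indep_of_le
    (indep_iSup_of_disjoint (fun k => (hf k).comap_le) ((iIndepFun_iff_iIndep _ _ _).1 h) hST)
    hX.comap_le hY.comap_le

end Subfamily

section Product

variable {Ω : Type*} {mΩ : MeasurableSpace Ω} {μ : Measure Ω} {X Y : Ω → ℝ}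

lemma IndepFun.sq (h : X ⟂ᵢ[μ] Y) : (fun ω => X ω ^ 2) ⟂ᵢ[μ] (fun ω => Y ω ^ 2) :=
  h.comp (measurable_id.pow_const 2) (measurable_id.pow_const 2)

lemma IndepFun.integral_mul_sq (h : X ⟂ᵢ[μ] Y) (hX : AEStronglyMeasurable X μ)
    (hY : AEStronglyMeasurable Y μ) : μ[(X * Y) ^ 2] = μ[X ^ 2] * μ[Y ^ 2] := by
  simp only [Pi.pow_apply, Pi.mul_apply, mul_pow]
  exact h.sq.integral_fun_mul_eq_mul_integral (hX.pow 2) (hY.pow 2)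

lemma IndepFun.memLp_two_mul (h : X ⟂ᵢ[μ] Y) (hX : MemLp X 2 μ) (hY : MemLp Y 2 μ) :
    MemLp (X * Y) 2 μ := by
  rw [memLp_two_iff_integrable_sq (hX.1.mul hY.1)]
  simp only [Pi.mul_apply, mul_pow]
  exact h.sq.integrable_mul hX.integrable_sq hY.integrable_sq

lemma IndepFun.variance_mul [IsProbabilityMeasure μ] (h : X ⟂ᵢ[μ] Y) (hX : MemLp X 2 μ)
    (hY : MemLp Y 2 μ) :
    Var[X * Y; μ] = μ[X ^ 2] * μ[Y ^ 2] - (μ[X] * μ[Y]) ^ 2 := by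
  rw [variance_eq_sub (h.memLp_two_mul hX hY), h.integral_mul_sq hX.1 hY.1,
    h.integral_mul_eq_mul_integral hX.1 hY.1]

end Product

section Bernoulli

variable {Ω : Type*} {mΩ : MeasurableSpace Ω} {μ : Measure Ω}

structure IsBernoulli (X : Ω → ℝ) (r : ℝ) (μ : Measure Ω) : Prop where
  measurable : Measurable X
  zero_or_one : ∀ ω, X ω = 0 ∨ X ω = 1
  measure_eq_one : μ {ω | X ω = 1} = ENNReal.ofReal r

namespace IsBernoulli

variable {X : Ω → ℝ} {r : ℝ}

lemma sq_eq (hX : IsBernoulli X r μ) : X ^ 2 = X := by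
  funext ω
  rcases hX.zero_or_one ω with h | h <;> simp [h]

lemma memLp [IsFiniteMeasure μ] (hX : IsBernoulli X r μ) (p : ENNReal) : MemLp X p μ :=
  .of_bound hX.measurable.aestronglyMeasurable 1 <| ae_of_all _ fun ω => by
    rcases hX.zero_or_one ω with h | h <;> simp [h]

lemma integral_eq (hX : IsBernoulli X r μ) (hr : 0 ≤ r) : μ[X] = r := by
  have hind : X = {ω | X ω = 1}.indicator 1 := by
    funext ω
    rcases hX.zero_or_one ω with h | h <;> simp [h]
  have hs : MeasurableSet {ω | X ω = 1} := hX.measurable (measurableSet_singleton 1)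
  rw [hind, integral_indicator_one hs, measureReal_def,
    hX.measure_eq_one, ENNReal.toReal_ofReal hr]

lemma variance_eq [IsProbabilityMeasure μ] (hX : IsBernoulli X r μ) (hr : 0 ≤ r) :
    Var[X; μ] = r - r ^ 2 := by
  rw [variance_eq_sub (hX.memLp 2), hX.sq_eq, hX.integral_eq hr]

end IsBernoulli

variable {ι : Type*} [Fintype ι] {X : ι → Ω → ℝ} {r : ℝ}

lemma integral_sum_of_isBernoulli [IsFiniteMeasure μ] (hX : ∀ i, IsBernoulli (X i) r μ)
    (hr : 0 ≤ r) :
    μ[∑ i, X i] = Fintype.card ι * r := by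
  simp only [Finset.sum_apply]
  rw [integral_finsetSum _ fun i _ => ((hX i).memLp 1).integrable le_rfl]
  simp [(hX _).integral_eq hr]

lemma integral_sq_sum_of_isBernoulli [IsProbabilityMeasure μ] (hX : ∀ i, IsBernoulli (X i) r μ)
    (hr : 0 ≤ r) (hindep : Pairwise fun i j => X i ⟂ᵢ[μ] X j) :
    μ[(∑ i, X i) ^ 2] = Fintype.card ι * (r - r ^ 2) + (Fintype.card ι * r) ^ 2 := by
  have hvar : Var[∑ i, X i; μ] = Fintype.card ι * (r - r ^ 2) := by
    rw [IndepFun.variance_sum (fun i _ => (hX i).memLp 2) fun i _ j _ hij => hindep hij]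
    simp [(hX _).variance_eq hr, mul_sub]
  rw [← hvar, ← integral_sum_of_isBernoulli hX hr, variance_eq_sub, sub_add_cancel]
  exact memLp_finsetSum' _ fun i _ => (hX i).memLp 2

end Bernoulli

section UBS

variable {Ω ι : Type*} {mΩ : MeasurableSpace Ω} {μ : Measure Ω} {a b : ι → ℕ}
  {U : ι → Ω → ℝ} {ξ : (v : ι) → Fin (a v) → Ω → ℝ} {η : (v : ι) → Fin (b v) → Ω → ℝ}

abbrev UBSIndex (a b : ι → ℕ) : Type _ := ι ⊕ ((Σ v, Fin (a v)) ⊕ (Σ v, Fin (b v)))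

def ubsFamily (U : ι → Ω → ℝ) (ξ : (v : ι) → Fin (a v) → Ω → ℝ)
    (η : (v : ι) → Fin (b v) → Ω → ℝ) : UBSIndex a b → Ω → ℝ :=
  Sum.elim U (Sum.elim (fun vi => ξ vi.1 vi.2) fun vj => η vj.1 vj.2)

def UBSIndex.key : UBSIndex a b → ι := Sum.elim id (Sum.elim Sigma.fst Sigma.fst)

def keyJoinCount (U : ι → Ω → ℝ) (ξ : (v : ι) → Fin (a v) → Ω → ℝ)
    (η : (v : ι) → Fin (b v) → Ω → ℝ) (v : ι) : Ω → ℝ :=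
  U v * ((∑ i, ξ v i) * ∑ j, η v j)

lemma measurable_ubsFamily (hU : ∀ v, Measurable (U v)) (hξ : ∀ v i, Measurable (ξ v i))
    (hη : ∀ v j, Measurable (η v j)) : ∀ k, Measurable (ubsFamily U ξ η k)
  | .inl v => hU v
  | .inr (.inl ⟨v, i⟩) => hξ v i
  | .inr (.inr ⟨v, j⟩) => hη v j

variable {S : Set (UBSIndex a b)} {v : ι}

lemma measurable_universe_comapOn (hS : .inl v ∈ S) :
    Measurable[comapOn (ubsFamily U ξ η) S] (U v) :=
  measurable_comapOn (f := ubsFamily U ξ η) hS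

lemma measurable_sum_tuples₁_comapOn (hS : ∀ i, .inr (.inl ⟨v, i⟩) ∈ S) :
    Measurable[comapOn (ubsFamily U ξ η) S] (∑ i, ξ v i) := by
  rw [Finset.sum_fn]
  exact Finset.measurable_sum _ fun i _ => measurable_comapOn (f := ubsFamily U ξ η) (hS i)

lemma measurable_sum_tuples₂_comapOn (hS : ∀ j, .inr (.inr ⟨v, j⟩) ∈ S) :
    Measurable[comapOn (ubsFamily U ξ η) S] (∑ j, η v j) := by
  rw [Finset.sum_fn]
  exact Finset.measurable_sum _ fun j _ => measurable_comapOn (f := ubsFamily U ξ η) (hS j)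

lemma measurable_keyJoinCount_comapOn :
    Measurable[comapOn (ubsFamily U ξ η) (UBSIndex.key ⁻¹' {v})] (keyJoinCount U ξ η v) :=
  (measurable_universe_comapOn (by simp [UBSIndex.key])).mul
    ((measurable_sum_tuples₁_comapOn fun _ => by simp [UBSIndex.key]).mul
      (measurable_sum_tuples₂_comapOn fun _ => by simp [UBSIndex.key]))

lemma indepFun_keyJoinCount (hIndep : iIndepFun (ubsFamily U ξ η) μ)
    (hU : ∀ v, Measurable (U v)) (hξ : ∀ v i, Measurable (ξ v i))
    (hη : ∀ v j, Measurable (η v j)) {w : ι} (hvw : v ≠ w) :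
    keyJoinCount U ξ η v ⟂ᵢ[μ] keyJoinCount U ξ η w :=
  hIndep.indepFun_of_measurable_comapOn (measurable_ubsFamily hU hξ hη)
    ((Set.disjoint_singleton.2 hvw).preimage UBSIndex.key) measurable_keyJoinCount_comapOn
    measurable_keyJoinCount_comapOn

lemma indepFun_universe_tuples (hIndep : iIndepFun (ubsFamily U ξ η) μ)
    (hU : ∀ v, Measurable (U v)) (hξ : ∀ v i, Measurable (ξ v i))
    (hη : ∀ v j, Measurable (η v j)) :
    U v ⟂ᵢ[μ] ((∑ i, ξ v i) * ∑ j, η v j) :=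
  hIndep.indepFun_of_measurable_comapOn (measurable_ubsFamily hU hξ hη)
    (S := Set.range Sum.inl) (T := Set.range Sum.inr) Set.isCompl_range_inl_range_inr.disjoint
    (measurable_universe_comapOn (Set.mem_range_self v))
    ((measurable_sum_tuples₁_comapOn fun _ => Set.mem_range_self _).mul
      (measurable_sum_tuples₂_comapOn fun _ => Set.mem_range_self _))

lemma indepFun_tuples (hIndep : iIndepFun (ubsFamily U ξ η) μ)
    (hU : ∀ v, Measurable (U v)) (hξ : ∀ v i, Measurable (ξ v i))
    (hη : ∀ v j, Measurable (η v j)) :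
    (∑ i, ξ v i) ⟂ᵢ[μ] ∑ j, η v j :=
  hIndep.indepFun_of_measurable_comapOn (measurable_ubsFamily hU hξ hη)
    (S := Set.range (Sum.inr ∘ Sum.inl)) (T := Set.range (Sum.inr ∘ Sum.inr))
    (Set.disjoint_range_iff.2 (by simp))
    (measurable_sum_tuples₁_comapOn fun _ => Set.mem_range_self _)
    (measurable_sum_tuples₂_comapOn fun _ => Set.mem_range_self _)

lemma pairwise_indepFun_tuples₁ (hIndep : iIndepFun (ubsFamily U ξ η) μ) :
    Pairwise fun i j => ξ v i ⟂ᵢ[μ] ξ v j :=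
  fun i j hij => hIndep.indepFun (i := .inr (.inl ⟨v, i⟩)) (j := .inr (.inl ⟨v, j⟩))
    (by simpa using hij)

lemma pairwise_indepFun_tuples₂ (hIndep : iIndepFun (ubsFamily U ξ η) μ) :
    Pairwise fun i j => η v i ⟂ᵢ[μ] η v j :=
  fun i j hij => hIndep.indepFun (i := .inr (.inr ⟨v, i⟩)) (j := .inr (.inr ⟨v, j⟩))
    (by simpa using hij)

variable {p q₁ q₂ : ℝ}

lemma memLp_keyJoinCount [IsFiniteMeasure μ] (hIndep : iIndepFun (ubsFamily U ξ η) μ)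
    (hU : ∀ v, IsBernoulli (U v) p μ) (hξ : ∀ v i, IsBernoulli (ξ v i) q₁ μ)
    (hη : ∀ v j, IsBernoulli (η v j) q₂ μ) : MemLp (keyJoinCount U ξ η v) 2 μ := by
  have hUm v := (hU v).measurable
  have hξm v i := (hξ v i).measurable
  have hηm v j := (hη v j).measurable
  exact (indepFun_universe_tuples hIndep hUm hξm hηm).memLp_two_mul ((hU v).memLp 2)
    ((indepFun_tuples hIndep hUm hξm hηm).memLp_two_mul
      (memLp_finsetSum' _ fun i _ => (hξ v i).memLp 2)
      (memLp_finsetSum' _ fun j _ => (hη v j).memLp 2))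

lemma variance_keyJoinCount [IsProbabilityMeasure μ] (hIndep : iIndepFun (ubsFamily U ξ η) μ)
    (hp : 0 ≤ p) (hq₁ : 0 ≤ q₁) (hq₂ : 0 ≤ q₂) (hU : ∀ v, IsBernoulli (U v) p μ)
    (hξ : ∀ v i, IsBernoulli (ξ v i) q₁ μ) (hη : ∀ v j, IsBernoulli (η v j) q₂ μ) :
    Var[keyJoinCount U ξ η v; μ] = p * (a v * (q₁ - q₁ ^ 2) + (a v * q₁) ^ 2)
      * (b v * (q₂ - q₂ ^ 2) + (b v * q₂) ^ 2) - (p * (a v * q₁) * (b v * q₂)) ^ 2 := by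
  have hUm v := (hU v).measurable
  have hξm v i := (hξ v i).measurable
  have hηm v j := (hη v j).measurable
  have hA : MemLp (∑ i, ξ v i) 2 μ := memLp_finsetSum' _ fun i _ => (hξ v i).memLp 2
  have hB : MemLp (∑ j, η v j) 2 μ := memLp_finsetSum' _ fun j _ => (hη v j).memLp 2
  have hAB : (∑ i, ξ v i) ⟂ᵢ[μ] ∑ j, η v j := indepFun_tuples hIndep hUm hξm hηm
  rw [keyJoinCount, (indepFun_universe_tuples hIndep hUm hξm hηm).variance_mul ((hU v).memLp 2)
      (hAB.memLp_two_mul hA hB), (hU v).sq_eq, (hU v).integral_eq hp,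
    hAB.integral_mul_sq hA.1 hB.1, hAB.integral_mul_eq_mul_integral hA.1 hB.1,
    integral_sq_sum_of_isBernoulli (hξ v) hq₁ (pairwise_indepFun_tuples₁ hIndep),
    integral_sq_sum_of_isBernoulli (hη v) hq₂ (pairwise_indepFun_tuples₂ hIndep),
    integral_sum_of_isBernoulli (hξ v) hq₁, integral_sum_of_isBernoulli (hη v) hq₂,
    Fintype.card_fin, Fintype.card_fin]
  ring

end UBS

end ProbabilityTheory

lemma centralized_count_variance_summand {x y ε₁ ε₂ p : ℝ} (hp : p ≠ 0) (hε₁ : ε₁ ≠ 0)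
    (hε₂ : ε₂ ≠ 0) :
    (1 / (p * (ε₁ / p) * (ε₂ / p))) ^ 2
      * (p * (x * (ε₁ / p - (ε₁ / p) ^ 2) + (x * (ε₁ / p)) ^ 2)
          * (y * (ε₂ / p - (ε₂ / p) ^ 2) + (y * (ε₂ / p)) ^ 2)
        - (p * (x * (ε₁ / p)) * (y * (ε₂ / p))) ^ 2)
    = (1 / p - 1) * (x ^ 2 * y ^ 2) + (1 / ε₂ - 1 / p) * (x ^ 2 * y)
      + (1 / ε₁ - 1 / p) * (x * y ^ 2) + (p / (ε₁ * ε₂) - 1 / ε₁ - 1 / ε₂ + 1 / p) * (x * y) := by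
  field_simp
  ring

theorem centralized_count_variance_general
    {Ω : Type*} [MeasurableSpace Ω] (μ : Measure Ω) [IsProbabilityMeasure μ]
    {ι : Type*} [Fintype ι]
    (a b : ι → ℕ) (ε₁ ε₂ p q₁ q₂ : ℝ)
    (hε₁ : 0 < ε₁) (hε₂ : 0 < ε₂)
    (hplb : max ε₁ ε₂ ≤ p)
    (hq₁def : q₁ = ε₁ / p) (hq₂def : q₂ = ε₂ / p)
    (U : ι → Ω → ℝ) (ξ : (v : ι) → Fin (a v) → Ω → ℝ) (η : (v : ι) → Fin (b v) → Ω → ℝ)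
    (hUm : ∀ v, Measurable (U v))
    (hξm : ∀ v i, Measurable (ξ v i))
    (hηm : ∀ v j, Measurable (η v j))
    (hU01 : ∀ v ω, U v ω = 0 ∨ U v ω = 1)
    (hξ01 : ∀ v i ω, ξ v i ω = 0 ∨ ξ v i ω = 1)
    (hη01 : ∀ v j ω, η v j ω = 0 ∨ η v j ω = 1)
    (hUp : ∀ v, μ {ω | U v ω = 1} = ENNReal.ofReal p)
    (hξq : ∀ v i, μ {ω | ξ v i ω = 1} = ENNReal.ofReal q₁)
    (hηq : ∀ v j, μ {ω | η v j ω = 1} = ENNReal.ofReal q₂)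
    (hIndep : iIndepFun
      (Sum.elim (fun v : ι => U v)
        (Sum.elim (fun vi : Σ v : ι, Fin (a v) => ξ vi.1 vi.2)
                  (fun vj : Σ v : ι, Fin (b v) => η vj.1 vj.2))) μ) :
    variance (fun ω => (1 / (p * q₁ * q₂)) *
        ∑ v, U v ω * (∑ i, ξ v i ω) * (∑ j, η v j ω)) μ
      = (1 / p - 1) * (∑ v, (a v : ℝ) ^ 2 * (b v : ℝ) ^ 2)
        + (1 / ε₂ - 1 / p) * (∑ v, (a v : ℝ) ^ 2 * (b v : ℝ))
        + (1 / ε₁ - 1 / p) * (∑ v, (a v : ℝ) * (b v : ℝ) ^ 2)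
        + (p / (ε₁ * ε₂) - 1 / ε₁ - 1 / ε₂ + 1 / p) * (∑ v, (a v : ℝ) * (b v : ℝ)) := by
  have hp : 0 < p := hε₁.trans_le ((le_max_left _ _).trans hplb)
  subst hq₁def hq₂def
  have hUb v : IsBernoulli (U v) p μ := ⟨hUm v, hU01 v, hUp v⟩
  have hξb v i : IsBernoulli (ξ v i) (ε₁ / p) μ := ⟨hξm v i, hξ01 v i, hξq v i⟩
  have hηb v j : IsBernoulli (η v j) (ε₂ / p) μ := ⟨hηm v j, hη01 v j, hηq v j⟩
  have hZ : (fun ω => 1 / (p * (ε₁ / p) * (ε₂ / p)) *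
        ∑ v, U v ω * (∑ i, ξ v i ω) * (∑ j, η v j ω))
      = fun ω => 1 / (p * (ε₁ / p) * (ε₂ / p)) * (∑ v, keyJoinCount U ξ η v) ω := by
    simp [keyJoinCount, mul_assoc]
  rw [hZ, variance_const_mul,
    IndepFun.variance_sum (fun v _ => memLp_keyJoinCount hIndep hUb hξb hηb)
      fun v _ w _ hvw => indepFun_keyJoinCount hIndep hUm hξm hηm hvw]
  simp only [Finset.mul_sum, ← Finset.sum_add_distrib]
  refine Finset.sum_congr rfl fun v _ => ?_
  rw [variance_keyJoinCount hIndep hp.le (by positivity) (by positivity) hUb hξb hηb,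
    centralized_count_variance_summand hp.ne' hε₁.ne' hε₂.ne']

/-- **Centralized count variance.**
Join-frequency model: `ι` indexes join-key values, `a b : ι → ℕ` are the key frequencies in the
two tables.  UBS sampling model: `U v` is Bernoulli(`p`) (the universe sampler), `ξ v i` are
Bernoulli(`q₁`) and `η v j` are Bernoulli(`q₂`) (the uniform samplers for the tuples of each
table), and the whole family is mutually independent.  The sampled-join count is
`Z ω = ∑ v, U v ω * (∑ i, ξ v i ω) * (∑ j, η v j ω)` and the count estimator is
`Ĵ_count = Z / (p q₁ q₂)`.  With universe rate `max ε₁ ε₂ ≤ p ≤ 1` and uniform rates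
`q₁ = ε₁/p`, `q₂ = ε₂/p`,
`Var(Ĵ_count) = (1/p − 1)·γ₂₂ + (1/ε₂ − 1/p)·γ₂₁ + (1/ε₁ − 1/p)·γ₁₂
+ (p/(ε₁ε₂) − 1/ε₁ − 1/ε₂ + 1/p)·γ₁₁`, where `γᵢⱼ = ∑ v, (a v)^i (b v)^j`. -/
theorem centralized_count_variance
    {Ω : Type*} [MeasurableSpace Ω] (μ : Measure Ω) [IsProbabilityMeasure μ]
    {ι : Type*} [Fintype ι]
    (a b : ι → ℕ) (ε₁ ε₂ p q₁ q₂ : ℝ)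
    (hε₁ : 0 < ε₁) (hε₁1 : ε₁ ≤ 1) (hε₂ : 0 < ε₂) (hε₂1 : ε₂ ≤ 1)
    (hplb : max ε₁ ε₂ ≤ p) (hp1 : p ≤ 1)
    (hq₁def : q₁ = ε₁ / p) (hq₂def : q₂ = ε₂ / p)
    (U : ι → Ω → ℝ) (ξ : (v : ι) → Fin (a v) → Ω → ℝ) (η : (v : ι) → Fin (b v) → Ω → ℝ)
    (hUm : ∀ v, Measurable (U v))
    (hξm : ∀ v i, Measurable (ξ v i))
    (hηm : ∀ v j, Measurable (η v j))
    (hU01 : ∀ v ω, U v ω = 0 ∨ U v ω = 1)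
    (hξ01 : ∀ v i ω, ξ v i ω = 0 ∨ ξ v i ω = 1)
    (hη01 : ∀ v j ω, η v j ω = 0 ∨ η v j ω = 1)
    (hUp : ∀ v, μ {ω | U v ω = 1} = ENNReal.ofReal p)
    (hξq : ∀ v i, μ {ω | ξ v i ω = 1} = ENNReal.ofReal q₁)
    (hηq : ∀ v j, μ {ω | η v j ω = 1} = ENNReal.ofReal q₂)
    (hIndep : iIndepFun
      (Sum.elim (fun v : ι => U v)
        (Sum.elim (fun vi : Σ v : ι, Fin (a v) => ξ vi.1 vi.2)
                  (fun vj : Σ v : ι, Fin (b v) => η vj.1 vj.2))) μ) :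
    variance (fun ω => (1 / (p * q₁ * q₂)) *
        ∑ v, U v ω * (∑ i, ξ v i ω) * (∑ j, η v j ω)) μ
      = (1 / p - 1) * (∑ v, (a v : ℝ) ^ 2 * (b v : ℝ) ^ 2)
        + (1 / ε₂ - 1 / p) * (∑ v, (a v : ℝ) ^ 2 * (b v : ℝ))
        + (1 / ε₁ - 1 / p) * (∑ v, (a v : ℝ) * (b v : ℝ) ^ 2)
        + (p / (ε₁ * ε₂) - 1 / ε₁ - 1 / ε₂ + 1 / p) * (∑ v, (a v : ℝ) * (b v : ℝ)) :=
  centralized_count_variance_general μ a b ε₁ ε₂ p q₁ q₂ hε₁ hε₂ hplb hq₁def hq₂def U ξ η hUm hξm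
    hηm hU01 hξ01 hη01 hUp hξq hηq hIndep
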